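/- arXiv:2411.00906 — 3 statements merged into one kernel-verified Lean document; each statement's English description precedes it below -/
import Mathlib

section
/- Let X be an intrinsic metric space, p ∈ X, ε > 0, and d_ε the conformal deformation of X by ρ_ε(x) = exp(−ε d(x,p)). Then for every w ∈ X and all x, y in the open ball B(w,1), e^{−5ε} ρ_ε(w) d(x,y) ≤ d_ε(x,y) ≤ 2 e^{5ε} ρ_ε(w) d(x,y); in particular the identity map (X, d) → (X, d_ε) is locally bilipschitz. -/
open Set Filter Metric MeasureTheory

/-- Conformal density `ρ_ε(x) = exp(-ε d(x,p))`. -/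
noncomputable def rho {X : Type*} [MetricSpace X] (ε : ℝ) (p x : X) : ℝ :=
  Real.exp (-(ε * dist x p))

/-- `γ : [0,L] → X` is a curve parametrized by arclength: continuous, and the
length (total variation) of `γ` on `[s,t] ⊆ [0,L]` equals `t - s`. -/
def IsUnitSpeed {X : Type*} [MetricSpace X] (γ : ℝ → X) (L : ℝ) : Prop :=
  ContinuousOn γ (Set.Icc 0 L) ∧
    ∀ s t : ℝ, 0 ≤ s → s ≤ t → t ≤ L →
      eVariationOn γ (Set.Icc s t) = ENNReal.ofReal (t - s)

/-- Conformal deformation distance `d_ρ(x,y) = inf_γ ∫_γ ρ ds`, the infimum taken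
over rectifiable curves from `x` to `y` (parametrized by arclength). -/
noncomputable def confDist {X : Type*} [MetricSpace X] (ρ : X → ℝ) (x y : X) : ℝ :=
  sInf { l : ℝ | ∃ (γ : ℝ → X) (T : ℝ), 0 ≤ T ∧ IsUnitSpeed γ T ∧
    γ 0 = x ∧ γ T = y ∧ l = ∫ t in (0:ℝ)..T, ρ (γ t) }

/-- `X` is intrinsic: any two points can be joined, for each `c > 1`, by a curve
of length at most `c·d(x,y)`. -/
def Intrinsic (X : Type*) [MetricSpace X] : Prop :=
  ∀ x y : X, ∀ c : ℝ, 1 < c → ∃ (γ : ℝ → X) (T : ℝ), 0 ≤ T ∧ IsUnitSpeed γ T ∧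
    γ 0 = x ∧ γ T = y ∧ T ≤ c * dist x y

/-- Gromov product `(x|y)_p`. -/
noncomputable def gprod {X : Type*} [MetricSpace X] (x y p : X) : ℝ :=
  (dist x p + dist y p - dist x y) / 2

/-- `X` is Gromov `δ`-hyperbolic. -/
def GromovHyperbolic (X : Type*) [MetricSpace X] (δ : ℝ) : Prop :=
  ∀ x y z p : X, gprod x z p ≥ min (gprod x y p) (gprod y z p) - δ

/-- A sequence is Cauchy with respect to a (possibly different) distance function `d`. -/
def CauchyIn {X : Type*} (d : X → X → ℝ) (u : ℕ → X) : Prop :=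
  ∀ η : ℝ, 0 < η → ∃ N : ℕ, ∀ m n : ℕ, N ≤ m → N ≤ n → d (u m) (u n) < η

/-- A sequence does not converge to any point of `X` with respect to `d`. -/
def DivergesIn {X : Type*} (d : X → X → ℝ) (u : ℕ → X) : Prop :=
  ¬ ∃ z : X, Filter.Tendsto (fun n => d (u n) z) Filter.atTop (nhds 0)

/-- A sequence representing a point of the metric boundary of `(X, d)`:
`d`-Cauchy but not `d`-convergent in `X`. -/
def BoundarySeq {X : Type*} (d : X → X → ℝ) (u : ℕ → X) : Prop :=
  CauchyIn d u ∧ DivergesIn d u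

/-- Distance from `z` to the metric boundary of `(X,d)`: infimum, over boundary
points (represented by Cauchy non-convergent sequences), of the limiting distance. -/
noncomputable def bdryDist {X : Type*} (d : X → X → ℝ) (z : X) : ℝ :=
  sInf { r : ℝ | ∃ u : ℕ → X, BoundarySeq d u ∧
    Filter.Tendsto (fun n => d z (u n)) Filter.atTop (nhds r) }

/-- A Gromov sequence: `(u_i|u_j)_p → ∞` as `i, j → ∞`. -/
def GromovSeq {X : Type*} [MetricSpace X] (p : X) (u : ℕ → X) : Prop :=
  Filter.Tendsto (fun nm : ℕ × ℕ => gprod (u nm.1) (u nm.2) p)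
    Filter.atTop Filter.atTop

section ConfAux

variable {X : Type*} [MetricSpace X]

lemma rho_pos (ε : ℝ) (p x : X) : 0 < rho ε p x := Real.exp_pos _

lemma rho_continuous (ε : ℝ) (p : X) : Continuous (rho ε p) := by
  unfold rho
  exact Real.continuous_exp.comp ((continuous_const.mul (continuous_id.dist continuous_const)).neg)

lemma rho_le_of_close {ε : ℝ} (hε : 0 ≤ ε) (p w x : X) (h : dist x w ≤ 5) :
    rho ε p x ≤ Real.exp (5 * ε) * rho ε p w := by
  unfold rho
  rw [← Real.exp_add]
  apply Real.exp_le_exp.2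
  have h1 : dist w p ≤ dist w x + dist x p := dist_triangle _ _ _
  have h2 : dist w x ≤ 5 := by rwa [dist_comm]
  nlinarith

lemma rho_ge_of_close {ε : ℝ} (hε : 0 ≤ ε) (p w x : X) (h : dist x w ≤ 5) :
    Real.exp (-(5 * ε)) * rho ε p w ≤ rho ε p x := by
  unfold rho
  rw [← Real.exp_add]
  apply Real.exp_le_exp.2
  have h1 : dist x p ≤ dist x w + dist w p := dist_triangle _ _ _
  nlinarith

lemma unitSpeed_dist_le {γ : ℝ → X} {T : ℝ} (h : IsUnitSpeed γ T) {s t : ℝ}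
    (hs : 0 ≤ s) (hst : s ≤ t) (ht : t ≤ T) : dist (γ s) (γ t) ≤ t - s := by
  have h1 := h.2 s t hs hst ht
  have h2 := eVariationOn.edist_le γ (x := s) (y := t)
      (Set.mem_Icc.2 ⟨le_refl s, hst⟩) (Set.mem_Icc.2 ⟨hst, le_refl t⟩)
  rw [h1] at h2
  exact (edist_le_ofReal (by linarith)).1 h2

lemma rho_integrable {γ : ℝ → X} {T : ℝ} (hγ : ContinuousOn γ (Set.Icc 0 T))
    (ε : ℝ) (p : X) {a b : ℝ} (ha : 0 ≤ a) (hab : a ≤ b) (hb : b ≤ T) :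
    IntervalIntegrable (fun t => rho ε p (γ t)) MeasureTheory.volume a b := by
  apply ContinuousOn.intervalIntegrable
  rw [Set.uIcc_of_le hab]
  exact (rho_continuous ε p).comp_continuousOn (hγ.mono (Set.Icc_subset_Icc ha hb))

lemma curve_lower {ε : ℝ} (hε : 0 < ε) (p w x y : X) (hx : dist x w < 1) (hy : dist y w < 1)
    {γ : ℝ → X} {T : ℝ} (hT : 0 ≤ T) (hγ : IsUnitSpeed γ T) (h0 : γ 0 = x) (hTy : γ T = y) :
    Real.exp (-(5 * ε)) * rho ε p w * dist x y ≤ ∫ t in (0:ℝ)..T, rho ε p (γ t) := by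
  have hA : (0:ℝ) ≤ Real.exp (-(5 * ε)) * rho ε p w :=
    mul_nonneg (Real.exp_pos _).le (rho_pos ε p w).le
  by_cases hcase : ∀ t ∈ Set.Icc (0:ℝ) T, dist (γ t) w ≤ 5
  · have hdxy : dist x y ≤ T := by
      have h1 := unitSpeed_dist_le hγ (le_refl 0) hT (le_refl T)
      rw [h0, hTy] at h1
      linarith
    calc Real.exp (-(5 * ε)) * rho ε p w * dist x y
        ≤ Real.exp (-(5 * ε)) * rho ε p w * T := mul_le_mul_of_nonneg_left hdxy hA
      _ = ∫ _ in (0:ℝ)..T, Real.exp (-(5 * ε)) * rho ε p w := by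
          rw [intervalIntegral.integral_const, smul_eq_mul]; ring
      _ ≤ ∫ t in (0:ℝ)..T, rho ε p (γ t) :=
          intervalIntegral.integral_mono_on hT intervalIntegrable_const
            (rho_integrable hγ.1 ε p (le_refl 0) hT (le_refl T))
            (fun t ht => rho_ge_of_close hε.le p w (γ t) (hcase t ht))
  · push_neg at hcase
    obtain ⟨t0, ht0, ht0d⟩ := hcase
    have hfc : ContinuousOn (fun t => dist (γ t) w) (Set.Icc 0 T) :=
      (continuous_id.dist continuous_const).comp_continuousOn hγ.1
    set S : Set ℝ := Set.Icc 0 T ∩ (fun t => dist (γ t) w) ⁻¹' Set.Ici 5 with hSdef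
    have hScl : IsClosed S := hfc.preimage_isClosed_of_isClosed isClosed_Icc isClosed_Ici
    have hSne : S.Nonempty := ⟨t0, ht0, le_of_lt ht0d⟩
    have hSbdd : BddBelow S := ⟨0, fun t ht => ht.1.1⟩
    set t1 := sInf S with ht1def
    have ht1S : t1 ∈ S := hScl.csInf_mem hSne hSbdd
    have ht1I : t1 ∈ Set.Icc (0:ℝ) T := ht1S.1
    have ht1d : 5 ≤ dist (γ t1) w := ht1S.2
    have ht1pos : 0 < t1 := by
      rcases lt_or_eq_of_le ht1I.1 with h | h
      · exact h
      · exfalso; rw [← h, h0] at ht1d; linarith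
    have hlt : ∀ t ∈ Set.Ico (0:ℝ) t1, dist (γ t) w ≤ 5 := by
      intro t ht
      by_contra hcon
      push_neg at hcon
      have htS : t ∈ S := ⟨⟨ht.1, le_trans ht.2.le ht1I.2⟩, le_of_lt hcon⟩
      exact absurd (csInf_le hSbdd htS) (not_le.2 ht.2)
    have ht1le : dist (γ t1) w ≤ 5 := by
      have hcl : t1 ∈ closure (Set.Ico (0:ℝ) t1) := by
        rw [closure_Ico (ne_of_lt ht1pos)]
        exact Set.mem_Icc.2 ⟨ht1pos.le, le_refl _⟩
      have hnb : (nhdsWithin t1 (Set.Ico (0:ℝ) t1)).NeBot :=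
        mem_closure_iff_nhdsWithin_neBot.1 hcl
      have hcw : ContinuousWithinAt (fun t => dist (γ t) w) (Set.Ico (0:ℝ) t1) t1 :=
        (hfc t1 ht1I).mono (Set.Ico_subset_Icc_self.trans (Set.Icc_subset_Icc le_rfl ht1I.2))
      exact le_of_tendsto hcw (eventually_nhdsWithin_of_forall hlt)
    have hbound : ∀ t ∈ Set.Icc (0:ℝ) t1, dist (γ t) w ≤ 5 := by
      intro t ht
      rcases eq_or_lt_of_le ht.2 with h | h
      · rw [h]; exact ht1le
      · exact hlt t ⟨ht.1, h⟩
    have h4 : 4 ≤ t1 := by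
      have hd := unitSpeed_dist_le hγ (le_refl 0) ht1I.1 ht1I.2
      rw [h0] at hd
      have htr : dist (γ t1) w ≤ dist (γ t1) x + dist x w := dist_triangle _ _ _
      rw [dist_comm (γ t1) x] at htr
      linarith
    have hdxy2 : dist x y ≤ 2 := by
      have htr := dist_triangle x w y
      rw [dist_comm w y] at htr
      linarith
    calc Real.exp (-(5 * ε)) * rho ε p w * dist x y
        ≤ Real.exp (-(5 * ε)) * rho ε p w * t1 :=
          mul_le_mul_of_nonneg_left (by linarith) hA
      _ = ∫ _ in (0:ℝ)..t1, Real.exp (-(5 * ε)) * rho ε p w := by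
          rw [intervalIntegral.integral_const, smul_eq_mul]; ring
      _ ≤ ∫ t in (0:ℝ)..t1, rho ε p (γ t) :=
          intervalIntegral.integral_mono_on ht1I.1 intervalIntegrable_const
            (rho_integrable hγ.1 ε p (le_refl 0) ht1I.1 ht1I.2)
            (fun t ht => rho_ge_of_close hε.le p w (γ t) (hbound t ht))
      _ ≤ ∫ t in (0:ℝ)..T, rho ε p (γ t) :=
          intervalIntegral.integral_mono_interval (le_refl 0) ht1I.1 ht1I.2
            (Filter.Eventually.of_forall fun t => (rho_pos ε p _).le)
            (rho_integrable hγ.1 ε p (le_refl 0) hT (le_refl T))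

end ConfAux

/-- on every ball `B(w,1)` the identity `(X,d) → (X,d_ε)` is bilipschitz:
`e^{-5ε} ρ_ε(w) d(x,y) ≤ d_ε(x,y) ≤ 2 e^{5ε} ρ_ε(w) d(x,y)`. -/
theorem confDist_locally_bilipschitz {X : Type*} [MetricSpace X] (hint : Intrinsic X)
    (p : X) (ε : ℝ) (hε : 0 < ε) (w : X) :
    ∀ x y : X, x ∈ Metric.ball w 1 → y ∈ Metric.ball w 1 →
      Real.exp (-(5 * ε)) * rho ε p w * dist x y ≤ confDist (rho ε p) x y ∧
        confDist (rho ε p) x y ≤ 2 * Real.exp (5 * ε) * rho ε p w * dist x y := by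
  intro x y hx hy
  rw [Metric.mem_ball] at hx hy
  obtain ⟨γ₀, T₀, hT₀, hγ₀, h0₀, hTy₀, hlen₀⟩ := hint x y 2 one_lt_two
  have hmem : (∫ t in (0:ℝ)..T₀, rho ε p (γ₀ t)) ∈
      { l : ℝ | ∃ (γ : ℝ → X) (T : ℝ), 0 ≤ T ∧ IsUnitSpeed γ T ∧
        γ 0 = x ∧ γ T = y ∧ l = ∫ t in (0:ℝ)..T, rho ε p (γ t) } :=
    ⟨γ₀, T₀, hT₀, hγ₀, h0₀, hTy₀, rfl⟩
  have hbdd : BddBelow { l : ℝ | ∃ (γ : ℝ → X) (T : ℝ), 0 ≤ T ∧ IsUnitSpeed γ T ∧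
      γ 0 = x ∧ γ T = y ∧ l = ∫ t in (0:ℝ)..T, rho ε p (γ t) } := by
    refine ⟨0, ?_⟩
    rintro l ⟨γ, T, hT, hγ, -, -, rfl⟩
    exact intervalIntegral.integral_nonneg hT fun t _ => (rho_pos ε p _).le
  constructor
  · unfold confDist
    apply le_csInf ⟨_, hmem⟩
    rintro l ⟨γ, T, hT, hγ, h0, hTy, rfl⟩
    exact curve_lower hε p w x y hx hy hT hγ h0 hTy
  · have hle : confDist (rho ε p) x y ≤ ∫ t in (0:ℝ)..T₀, rho ε p (γ₀ t) :=
      csInf_le hbdd hmem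
    refine le_trans hle ?_
    have hdxy2 : dist x y ≤ 2 := by
      have htr := dist_triangle x w y
      rw [dist_comm w y] at htr
      linarith
    have hpt : ∀ t ∈ Set.Icc (0:ℝ) T₀, rho ε p (γ₀ t) ≤ Real.exp (5 * ε) * rho ε p w := by
      intro t ht
      apply rho_le_of_close hε.le
      have h1 : dist (γ₀ t) x ≤ t := by
        have h2 := unitSpeed_dist_le hγ₀ (le_refl 0) ht.1 ht.2
        rw [h0₀, dist_comm] at h2
        linarith
      have htr := dist_triangle (γ₀ t) x w
      have ht2 : t ≤ T₀ := ht.2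
      linarith
    have hB : (0:ℝ) ≤ Real.exp (5 * ε) * rho ε p w :=
      mul_nonneg (Real.exp_pos _).le (rho_pos ε p w).le
    calc (∫ t in (0:ℝ)..T₀, rho ε p (γ₀ t))
        ≤ ∫ _ in (0:ℝ)..T₀, Real.exp (5 * ε) * rho ε p w :=
          intervalIntegral.integral_mono_on hT₀
            (rho_integrable hγ₀.1 ε p (le_refl 0) hT₀ (le_refl T₀))
            intervalIntegrable_const hpt
      _ = T₀ * (Real.exp (5 * ε) * rho ε p w) := by
          rw [intervalIntegral.integral_const, smul_eq_mul]; ring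
      _ ≤ (2 * dist x y) * (Real.exp (5 * ε) * rho ε p w) :=
          mul_le_mul_of_nonneg_right hlen₀ hB
      _ = 2 * Real.exp (5 * ε) * rho ε p w * dist x y := by ring
end

section
/- Let X be an intrinsic δ-hyperbolic metric space and let ᾱ : o ↷ ζ with arcs α_i : o ↷ u_i be a (μ,h)-road, with ζ in the Gromov boundary. Then for n ≤ m there exists a continuous (1,K)-rough quasi-geodesic from o to u_m passing through u_n, where K = 3μ + 3h. -/
open Set Filter Metric MeasureTheory

/-- A unit-speed curve is 1-Lipschitz on its domain. -/
lemma unitSpeed_dist_le_s7 {X : Type*} [MetricSpace X] {γ : ℝ → X} {L : ℝ}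
    (hγ : IsUnitSpeed γ L) {s t : ℝ} (h0 : 0 ≤ s) (hst : s ≤ t) (htL : t ≤ L) :
    dist (γ s) (γ t) ≤ t - s := by
  have h2 : edist (γ s) (γ t) ≤ eVariationOn γ (Set.Icc s t) :=
    eVariationOn.edist_le γ ⟨le_rfl, hst⟩ ⟨hst, le_rfl⟩
  rw [hγ.2 s t h0 hst htL, edist_dist] at h2
  exact (ENNReal.ofReal_le_ofReal_iff (by linarith)).mp h2

/-- A subarc of an `h`-short unit-speed arc is almost geodesic. -/
lemma short_lower {X : Type*} [MetricSpace X] {γ : ℝ → X} {L h : ℝ} {o : X}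
    (hγ : IsUnitSpeed γ L) (h0 : γ 0 = o) (hsh : L ≤ dist o (γ L) + h)
    {s t : ℝ} (hs : 0 ≤ s) (hst : s ≤ t) (ht : t ≤ L) :
    t - s - h ≤ dist (γ s) (γ t) := by
  have h1 : dist (γ 0) (γ s) ≤ s - 0 := unitSpeed_dist_le_s7 hγ le_rfl hs (hst.trans ht)
  have h2 : dist (γ t) (γ L) ≤ L - t := unitSpeed_dist_le_s7 hγ (hs.trans hst) ht le_rfl
  have h3 : dist (γ 0) (γ L) ≤ dist (γ 0) (γ s) + dist (γ s) (γ t) + dist (γ t) (γ L) :=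
    dist_triangle4 _ _ _ _
  rw [h0] at h1 h3
  linarith

/-- Lemma `non-completeness lemma`: given a `(μ,h)`-road
`α_i : o ↷ u_i` in an intrinsic `δ`-hyperbolic space and `n ≤ m`, there is a
continuous `(1, K)`-rough quasi-geodesic from `o` to `u_m` through `u_n`,
with `K = 3μ + 3h`. -/
theorem road_rough_quasi_geodesic {X : Type*} [MetricSpace X]
    (δ μ h : ℝ) (hδ : 0 ≤ δ) (hμ : 0 ≤ μ) (hh : 0 < h)
    (hint : Intrinsic X) (hhyp : GromovHyperbolic X δ) (o : X)
    (α : ℕ → ℝ → X) (L : ℕ → ℝ)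
    (hL0 : ∀ i, 0 ≤ L i)
    (hus : ∀ i, IsUnitSpeed (α i) (L i))
    (hstart : ∀ i, α i 0 = o)
    (hshort : ∀ i, L i ≤ dist o (α i (L i)) + h)
    (hmono : Monotone L) (htend : Filter.Tendsto L Filter.atTop Filter.atTop)
    (hroad : ∀ i j, i ≤ j → ∀ t ∈ Set.Icc (0:ℝ) (L i), dist (α i t) (α j t) ≤ μ)
    (n m : ℕ) (hnm : n ≤ m) :
    ∃ (γ : ℝ → X) (T t₀ : ℝ), 0 ≤ t₀ ∧ t₀ ≤ T ∧
      ContinuousOn γ (Set.Icc 0 T) ∧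
      γ 0 = o ∧ γ t₀ = α n (L n) ∧ γ T = α m (L m) ∧
      ∀ s t : ℝ, s ∈ Set.Icc 0 T → t ∈ Set.Icc 0 T →
        |s - t| - (3 * μ + 3 * h) ≤ dist (γ s) (γ t) ∧
          dist (γ s) (γ t) ≤ |s - t| + (3 * μ + 3 * h) := by
  have hLnm : L n ≤ L m := hmono hnm
  have hdxy : dist (α n (L n)) (α m (L n)) ≤ μ :=
    hroad n m hnm (L n) ⟨hL0 n, le_rfl⟩
  have hd0 : (0:ℝ) ≤ dist (α n (L n)) (α m (L n)) := dist_nonneg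
  have hc1 : (1:ℝ) < 1 + h / (dist (α n (L n)) (α m (L n)) + 1) := by
    have : 0 < h / (dist (α n (L n)) (α m (L n)) + 1) := div_pos hh (by linarith)
    linarith
  obtain ⟨β, σ, hσ0, hβus, hβ0, hβσ, hσle⟩ :=
    hint (α n (L n)) (α m (L n)) _ hc1
  have hσ : σ ≤ μ + h := by
    have h2 : h * dist (α n (L n)) (α m (L n)) / (dist (α n (L n)) (α m (L n)) + 1) ≤ h := by
      rw [div_le_iff₀ (by linarith)]
      nlinarith
    have h1 : (1 + h / (dist (α n (L n)) (α m (L n)) + 1)) * dist (α n (L n)) (α m (L n))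
        = dist (α n (L n)) (α m (L n))
          + h * dist (α n (L n)) (α m (L n)) / (dist (α n (L n)) (α m (L n)) + 1) := by
      ring
    rw [h1] at hσle
    linarith
  set g : ℝ → X := fun t =>
    if t ≤ L n then α n t else if t ≤ L n + σ then β (t - L n) else α m (t - σ) with hg
  -- evaluation lemmas
  have ev1 : ∀ t, t ≤ L n → g t = α n t := fun t ht => if_pos ht
  have ev2 : ∀ t, L n ≤ t → t ≤ L n + σ → g t = β (t - L n) := by
    intro t h1 h2
    by_cases hc : t ≤ L n
    · have heq : t = L n := le_antisymm hc h1
      rw [ev1 t hc, heq, sub_self, hβ0]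
    · simp only [hg, if_neg hc, if_pos h2]
  have ev3 : ∀ t, L n + σ ≤ t → g t = α m (t - σ) := by
    intro t h1
    by_cases hc : t ≤ L n
    · have hσz : σ = 0 := le_antisymm (by linarith) hσ0
      have heq : t = L n := le_antisymm hc (by linarith)
      rw [ev1 t hc, heq, hσz, sub_zero]
      have : β 0 = β σ := by rw [hσz]
      rw [hβ0] at this; rw [this, hβσ]
    · by_cases hc2 : t ≤ L n + σ
      · have heq : t = L n + σ := le_antisymm hc2 h1
        simp only [hg, if_neg hc, if_pos hc2]
        rw [heq, add_sub_cancel_left, hβσ, add_sub_cancel_right]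
      · simp only [hg, if_neg hc, if_neg hc2]
  -- the key two-sided estimate for ordered parameters
  have key : ∀ s t : ℝ, 0 ≤ s → s ≤ t → t ≤ L m + σ →
      dist (g s) (g t) ≤ t - s ∧ t - s - (3 * μ + 3 * h) ≤ dist (g s) (g t) := by
    intro s t hs hst htT
    rcases le_total s (L n) with hsa | hsa
    · rcases le_total t (L n) with hta | hta
      · -- both on α n
        rw [ev1 s hsa, ev1 t hta]
        have u1 := unitSpeed_dist_le_s7 (hus n) hs hst hta
        have l1 := short_lower (hus n) (hstart n) (hshort n) hs hst hta
        constructor <;> linarith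
      · rcases le_total t (L n + σ) with htb | htb
        · -- s on α n, t on bridge
          rw [ev1 s hsa, ev2 t hta htb]
          have u1 := unitSpeed_dist_le_s7 (hus n) hs hsa le_rfl
          have u2 : dist (β 0) (β (t - L n)) ≤ (t - L n) - 0 :=
            unitSpeed_dist_le_s7 hβus le_rfl (by linarith) (by linarith)
          rw [hβ0] at u2
          have tri1 : dist (α n s) (β (t - L n)) ≤
              dist (α n s) (α n (L n)) + dist (α n (L n)) (β (t - L n)) := dist_triangle _ _ _
          have tri2 : dist (α n s) (α n (L n)) ≤
              dist (α n s) (β (t - L n)) + dist (β (t - L n)) (α n (L n)) := dist_triangle _ _ _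
          have l1 := short_lower (hus n) (hstart n) (hshort n) hs hsa le_rfl
          have hc3 : dist (α n (L n)) (β (t - L n)) = dist (β (t - L n)) (α n (L n)) :=
            dist_comm _ _
          constructor <;> linarith
        · -- s on α n, t on tail of α m
          rw [ev1 s hsa, ev3 t htb]
          have htm : t - σ ≤ L m := by linarith
          have hta' : L n ≤ t - σ := by linarith
          have u1 := unitSpeed_dist_le_s7 (hus n) hs hsa le_rfl
          have u2 : dist (β 0) (β σ) ≤ σ - 0 := unitSpeed_dist_le_s7 hβus le_rfl hσ0 le_rfl
          rw [hβ0, hβσ] at u2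
          have u3 := unitSpeed_dist_le_s7 (hus m) (hs.trans hsa) hta' htm
          have tri1 : dist (α n s) (α m (t - σ)) ≤
              dist (α n s) (α n (L n)) + dist (α n (L n)) (α m (L n))
                + dist (α m (L n)) (α m (t - σ)) := dist_triangle4 _ _ _ _
          have tri2 : dist (α m s) (α m (t - σ)) ≤
              dist (α m s) (α n s) + dist (α n s) (α m (t - σ)) := dist_triangle _ _ _
          have hr : dist (α n s) (α m s) ≤ μ := hroad n m hnm s ⟨hs, hsa⟩
          have l3 : t - σ - s - h ≤ dist (α m s) (α m (t - σ)) :=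
            short_lower (hus m) (hstart m) (hshort m) hs (by linarith) htm
          rw [dist_comm (α m s) (α n s)] at tri2
          constructor <;> linarith
    · rcases le_total s (L n + σ) with hsb | hsb
      · rcases le_total t (L n + σ) with htb | htb
        · -- both on bridge
          rw [ev2 s hsa hsb, ev2 t (hsa.trans hst) htb]
          have u1 : dist (β (s - L n)) (β (t - L n)) ≤ (t - L n) - (s - L n) :=
            unitSpeed_dist_le_s7 hβus (by linarith) (by linarith) (by linarith)
          have := dist_nonneg (x := β (s - L n)) (y := β (t - L n))
          constructor <;> linarith
        · -- s on bridge, t on tail of α m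
          rw [ev2 s hsa hsb, ev3 t htb]
          have htm : t - σ ≤ L m := by linarith
          have u1 : dist (β (s - L n)) (β σ) ≤ σ - (s - L n) :=
            unitSpeed_dist_le_s7 hβus (by linarith) (by linarith) le_rfl
          rw [hβσ] at u1
          have u2 := unitSpeed_dist_le_s7 (hus m) (hL0 n) (by linarith : L n ≤ t - σ) htm
          have tri1 : dist (β (s - L n)) (α m (t - σ)) ≤
              dist (β (s - L n)) (α m (L n)) + dist (α m (L n)) (α m (t - σ)) :=
            dist_triangle _ _ _
          have tri2 : dist (α m (L n)) (α m (t - σ)) ≤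
              dist (α m (L n)) (β (s - L n)) + dist (β (s - L n)) (α m (t - σ)) :=
            dist_triangle _ _ _
          have l1 := short_lower (hus m) (hstart m) (hshort m) (hL0 n)
            (by linarith : L n ≤ t - σ) htm
          rw [dist_comm (α m (L n)) (β (s - L n))] at tri2
          constructor <;> linarith
      · -- both on tail of α m
        rw [ev3 s hsb, ev3 t (hsb.trans hst)]
        have hs' : 0 ≤ s - σ := by linarith [hL0 n]
        have u1 := unitSpeed_dist_le_s7 (hus m) hs' (by linarith) (by linarith : t - σ ≤ L m)
        have l1 := short_lower (hus m) (hstart m) (hshort m) hs' (by linarith)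
          (by linarith : t - σ ≤ L m)
        constructor <;> linarith
  refine ⟨g, L m + σ, L n, hL0 n, by linarith, ?_, ?_, ev1 (L n) le_rfl, ?_, ?_⟩
  · -- continuity from 1-Lipschitz
    have hlip : LipschitzOnWith 1 g (Set.Icc 0 (L m + σ)) := by
      rw [lipschitzOnWith_iff_dist_le_mul]
      intro p hp q hq
      rw [NNReal.coe_one, one_mul, Real.dist_eq]
      rcases le_total p q with hpq | hpq
      · have := (key p q hp.1 hpq hq.2).1
        have := neg_abs_le (p - q)
        linarith
      · have := (key q p hq.1 hpq hp.2).1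
        rw [dist_comm] at this
        have := le_abs_self (p - q)
        linarith
    exact hlip.continuousOn
  · rw [ev1 0 (hL0 n), hstart n]
  · rw [ev3 (L m + σ) (by linarith), add_sub_cancel_right]
  · intro s t hsI htI
    rcases le_total s t with hst | hst
    · have hk := key s t hsI.1 hst htI.2
      have habs : |s - t| = t - s := by rw [abs_sub_comm, abs_of_nonneg (by linarith)]
      rw [habs]
      constructor <;> linarith [hk.1, hk.2]
    · have hk := key t s htI.1 hst hsI.2
      rw [dist_comm] at hk
      have habs : |s - t| = s - t := abs_of_nonneg (by linarith)
      rw [habs]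
      constructor <;> linarith [hk.1, hk.2]
end

section
/- Let X be an intrinsic δ-hyperbolic space with a (4δ+2h, h)-road ᾱ : p ↷ ζ consisting of arcs α_n : p ↷ u_n, and let d_ε be the conformal deformation of X. Then the sequence (u_n) is Cauchy in (X, d_ε); more precisely, for n ≤ m, d_ε(u_n, u_m) ≤ (1/ε) e^{εK} e^{−ε t_n} where t_n = l(α_n) and K = 3(4δ+2h) + 3h. Consequently (X, d_ε) is incomplete. -/
open Set Filter Metric MeasureTheory

section Aux

variable {X : Type*} [MetricSpace X]

lemma integral_exp_linear (a b c k : ℝ) (hk : k ≠ 0) :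
    ∫ t in a..b, Real.exp (c + k * t) = (Real.exp (c + k * b) - Real.exp (c + k * a)) / k := by
  have hd : ∀ t : ℝ, HasDerivAt (fun t => Real.exp (c + k * t) / k) (Real.exp (c + k * t)) t := by
    intro t
    have h1 : HasDerivAt (fun t : ℝ => c + k * t) k t := by
      simpa using ((hasDerivAt_id t).const_mul k).const_add c
    have h2 := h1.exp.div_const k
    simpa [mul_div_assoc, mul_div_cancel_right₀ _ hk] using h2
  rw [intervalIntegral.integral_eq_sub_of_hasDerivAt (fun t _ => hd t)
    (Continuous.intervalIntegrable (by continuity) a b)]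
  ring

lemma IsUnitSpeed.dist_le {γ : ℝ → X} {L : ℝ} (h : IsUnitSpeed γ L) {s t : ℝ}
    (h0 : 0 ≤ s) (hst : s ≤ t) (htL : t ≤ L) : dist (γ s) (γ t) ≤ t - s := by
  have h1 := eVariationOn.edist_le γ (show s ∈ Set.Icc s t from ⟨le_refl s, hst⟩)
    (show t ∈ Set.Icc s t from ⟨hst, le_refl t⟩)
  rw [h.2 s t h0 hst htL, edist_dist] at h1
  exact (ENNReal.ofReal_le_ofReal_iff (by linarith)).mp h1

lemma isUnitSpeed_of_var {γ : ℝ → X} {L : ℝ}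
    (hv : ∀ s t : ℝ, 0 ≤ s → s ≤ t → t ≤ L →
      eVariationOn γ (Set.Icc s t) = ENNReal.ofReal (t - s)) : IsUnitSpeed γ L := by
  refine ⟨?_, hv⟩
  have key : ∀ a b : ℝ, a ∈ Set.Icc 0 L → b ∈ Set.Icc 0 L → a ≤ b →
      dist (γ a) (γ b) ≤ dist a b := by
    intro a b ha hb hab
    have h1 := eVariationOn.edist_le γ (show a ∈ Set.Icc a b from ⟨le_refl a, hab⟩)
      (show b ∈ Set.Icc a b from ⟨hab, le_refl b⟩)
    rw [hv a b ha.1 hab hb.2, edist_dist] at h1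
    have h2 := (ENNReal.ofReal_le_ofReal_iff (by linarith)).mp h1
    rw [Real.dist_eq, abs_of_nonpos (by linarith : a - b ≤ 0)]
    linarith
  have hlip : LipschitzOnWith 1 γ (Set.Icc 0 L) := by
    apply LipschitzOnWith.of_dist_le_mul
    intro a ha b hb
    rcases le_total a b with hab | hab
    · simpa using key a b ha hb hab
    · rw [dist_comm (γ a), dist_comm a]
      simpa using key b a hb ha hab
  exact hlip.continuousOn

lemma confSet_bddBelow (ε : ℝ) (p x y : X) :
    BddBelow { l : ℝ | ∃ (γ : ℝ → X) (T : ℝ), 0 ≤ T ∧ IsUnitSpeed γ T ∧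
      γ 0 = x ∧ γ T = y ∧ l = ∫ t in (0:ℝ)..T, rho ε p (γ t) } := by
  refine ⟨0, ?_⟩
  rintro l ⟨γ, T, hT, -, -, -, rfl⟩
  exact intervalIntegral.integral_nonneg hT fun u _ => (Real.exp_pos _).le

lemma confSet_nonempty (hint : Intrinsic X) (ε : ℝ) (p x y : X) :
    Set.Nonempty { l : ℝ | ∃ (γ : ℝ → X) (T : ℝ), 0 ≤ T ∧ IsUnitSpeed γ T ∧
      γ 0 = x ∧ γ T = y ∧ l = ∫ t in (0:ℝ)..T, rho ε p (γ t) } := by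
  obtain ⟨γ, T, hT, hu, h0, hT', -⟩ := hint x y 2 one_lt_two
  exact ⟨_, γ, T, hT, hu, h0, hT', rfl⟩

lemma confSet_subset_symm (ρ : X → ℝ) (x y : X) :
    { l : ℝ | ∃ (γ : ℝ → X) (T : ℝ), 0 ≤ T ∧ IsUnitSpeed γ T ∧
      γ 0 = x ∧ γ T = y ∧ l = ∫ t in (0:ℝ)..T, ρ (γ t) } ⊆
    { l : ℝ | ∃ (γ : ℝ → X) (T : ℝ), 0 ≤ T ∧ IsUnitSpeed γ T ∧
      γ 0 = y ∧ γ T = x ∧ l = ∫ t in (0:ℝ)..T, ρ (γ t) } := by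
  rintro l ⟨γ, T, hT, ⟨hc, hv⟩, h0, hTy, rfl⟩
  refine ⟨fun t => γ (T - t), T, hT, ⟨?_, ?_⟩, by simpa using hTy, by simpa using h0, ?_⟩
  · exact hc.comp ((continuous_const.sub continuous_id).continuousOn)
      (fun u hu => ⟨by linarith [hu.2], by linarith [hu.1]⟩)
  · intro s t hs hst htL
    have h1 : eVariationOn (γ ∘ fun u => T - u) (Set.Icc s t)
        = eVariationOn γ ((fun u => T - u) '' Set.Icc s t) :=
      eVariationOn.comp_eq_of_antitoneOn γ _ (fun a _ b _ hab => show T - b ≤ T - a by linarith)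
    rw [show (fun t => γ (T - t)) = γ ∘ fun u => T - u from rfl, h1,
      Set.image_const_sub_Icc, hv (T - t) (T - s) (by linarith) (by linarith) (by linarith)]
    congr 1; ring
  · have h2 := intervalIntegral.integral_comp_sub_left (f := fun s => ρ (γ s))
      (a := 0) (b := T) T
    simp only [sub_self, sub_zero] at h2
    exact h2.symm

lemma confDist_symm (ρ : X → ℝ) (x y : X) : confDist ρ x y = confDist ρ y x := by
  unfold confDist
  rw [Set.Subset.antisymm (confSet_subset_symm ρ x y) (confSet_subset_symm ρ y x)]

lemma confDist_lower (hint : Intrinsic X) {ε : ℝ} (hε : 0 < ε) (p x z : X) :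
    Real.exp (-(ε * dist z p)) / ε * (1 - Real.exp (-(ε * dist x z)))
      ≤ confDist (rho ε p) x z := by
  apply le_csInf (confSet_nonempty hint ε p x z)
  rintro l ⟨γ, T, hT, hu, h0, hTz, rfl⟩
  have hdxz : dist x z ≤ T := by
    have h1 := hu.dist_le le_rfl hT le_rfl
    rw [h0, hTz] at h1; linarith
  have hmono : ∀ t ∈ Set.Icc (0:ℝ) T,
      Real.exp ((-(ε * dist z p) - ε * T) + ε * t) ≤ rho ε p (γ t) := by
    intro t ht
    have h1 : dist (γ t) z ≤ T - t := by
      have h2 := hu.dist_le ht.1 ht.2 le_rfl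
      rwa [hTz] at h2
    have h2 : dist (γ t) p ≤ dist (γ t) z + dist z p := dist_triangle _ _ _
    unfold rho
    apply Real.exp_le_exp.mpr
    nlinarith [mul_le_mul_of_nonneg_left
      (show dist (γ t) p ≤ dist z p + (T - t) by linarith) hε.le]
  have hint1 : IntervalIntegrable (fun t => rho ε p (γ t)) MeasureTheory.volume 0 T := by
    apply ContinuousOn.intervalIntegrable
    rw [Set.uIcc_of_le hT]
    exact (rho_continuous ε p).comp_continuousOn hu.1
  have hint2 : IntervalIntegrable
      (fun t => Real.exp ((-(ε * dist z p) - ε * T) + ε * t)) MeasureTheory.volume 0 T :=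
    Continuous.intervalIntegrable (by continuity) 0 T
  have h3 := intervalIntegral.integral_mono_on hT hint2 hint1 hmono
  rw [integral_exp_linear 0 T _ ε hε.ne'] at h3
  calc Real.exp (-(ε * dist z p)) / ε * (1 - Real.exp (-(ε * dist x z)))
      ≤ Real.exp (-(ε * dist z p)) / ε * (1 - Real.exp (-(ε * T))) := by
        have h4 : Real.exp (-(ε * T)) ≤ Real.exp (-(ε * dist x z)) :=
          Real.exp_le_exp.mpr (by nlinarith [mul_le_mul_of_nonneg_left hdxz hε.le])
        have h5 : (0:ℝ) ≤ Real.exp (-(ε * dist z p)) / ε := by positivity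
        nlinarith
    _ = (Real.exp ((-(ε * dist z p) - ε * T) + ε * T)
          - Real.exp ((-(ε * dist z p) - ε * T) + ε * 0)) / ε := by
        rw [show (-(ε * dist z p) - ε * T) + ε * T = -(ε * dist z p) by ring,
          show (-(ε * dist z p) - ε * T) + ε * 0 = -(ε * dist z p) + -(ε * T) by ring,
          Real.exp_add]
        ring
    _ ≤ ∫ t in (0:ℝ)..T, rho ε p (γ t) := h3

end Aux

set_option maxHeartbeats 1000000 in
/-- the endpoints `u_n` of a `(4δ+2h, h)`-road `α_n : p ↷ u_n` form a
`d_ε`-Cauchy sequence with `d_ε(u_n,u_m) ≤ (1/ε) e^{εK} e^{-ε l(α_n)}` for `n ≤ m`,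
where `K = 3(4δ+2h)+3h`; consequently `(X, d_ε)` is incomplete. -/
theorem road_endpoints_cauchy_incomplete {X : Type*} [MetricSpace X]
    (δ h ε : ℝ) (hδ : 0 ≤ δ) (hh : 0 < h) (hε : 0 < ε)
    (hint : Intrinsic X) (hhyp : GromovHyperbolic X δ) (p : X)
    (α : ℕ → ℝ → X) (L : ℕ → ℝ)
    (hL0 : ∀ i, 0 ≤ L i)
    (hus : ∀ i, IsUnitSpeed (α i) (L i))
    (hstart : ∀ i, α i 0 = p)
    (hshort : ∀ i, L i ≤ dist p (α i (L i)) + h)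
    (hmono : Monotone L) (htend : Filter.Tendsto L Filter.atTop Filter.atTop)
    (hroad : ∀ i j, i ≤ j → ∀ t ∈ Set.Icc (0:ℝ) (L i),
      dist (α i t) (α j t) ≤ 4 * δ + 2 * h) :
    (∀ n m : ℕ, n ≤ m →
      confDist (rho ε p) (α n (L n)) (α m (L m)) ≤
        (1 / ε) * Real.exp (ε * (3 * (4 * δ + 2 * h) + 3 * h)) *
          Real.exp (-(ε * L n))) ∧
    CauchyIn (confDist (rho ε p)) (fun n => α n (L n)) ∧
    DivergesIn (confDist (rho ε p)) (fun n => α n (L n)) := by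
  set K : ℝ := 3 * (4 * δ + 2 * h) + 3 * h with hK
  have hB : (0:ℝ) ≤ 4 * δ + 2 * h := by linarith
  have key : ∀ n m : ℕ, n ≤ m →
      confDist (rho ε p) (α n (L n)) (α m (L m)) ≤
        (1 / ε) * Real.exp (ε * K) * Real.exp (-(ε * L n)) := by
    intro n m hnm
    obtain ⟨β, T₀, hT₀, hβu, hβ0, hβT, hβlen⟩ :=
      hint (α n (L n)) (α m (L n)) 2 one_lt_two
    have hq : dist (α n (L n)) (α m (L n)) ≤ 4 * δ + 2 * h :=
      hroad n m hnm (L n) ⟨hL0 n, le_rfl⟩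
    have hT₀le : T₀ ≤ 2 * (4 * δ + 2 * h) := by linarith
    have hLnm : L n ≤ L m := hmono hnm
    set Ltot : ℝ := T₀ + (L m - L n) with hLtot
    have hLtot0 : (0:ℝ) ≤ Ltot := by rw [hLtot]; linarith
    have hT₀Ltot : T₀ ≤ Ltot := by rw [hLtot]; linarith
    set γ : ℝ → X := fun t => if t ≤ T₀ then β t else α m (t + (L n - T₀)) with hγ
    have hE1 : ∀ s t : ℝ, t ≤ T₀ → Set.EqOn γ β (Set.Icc s t) := by
      intro s t ht u hu
      simp only [hγ]
      rw [if_pos (le_trans hu.2 ht)]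
    have hE2 : ∀ s t : ℝ, T₀ ≤ s →
        Set.EqOn γ ((α m) ∘ fun u => u + (L n - T₀)) (Set.Icc s t) := by
      intro s t hs u hu
      simp only [hγ, Function.comp]
      by_cases h' : u ≤ T₀
      · have hu' : u = T₀ := le_antisymm h' (le_trans hs hu.1)
        rw [if_pos h', hu', hβT]
        congr 1; ring
      · rw [if_neg h']
    have hvar1 : ∀ s t : ℝ, 0 ≤ s → s ≤ t → t ≤ T₀ →
        eVariationOn γ (Set.Icc s t) = ENNReal.ofReal (t - s) := by
      intro s t hs hst ht
      rw [eVariationOn.eq_of_eqOn (hE1 s t ht)]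
      exact hβu.2 s t hs hst ht
    have hvar2 : ∀ s t : ℝ, T₀ ≤ s → s ≤ t → t ≤ Ltot →
        eVariationOn γ (Set.Icc s t) = ENNReal.ofReal (t - s) := by
      intro s t hs hst ht
      have htL : t + (L n - T₀) ≤ L m := by
        rw [hLtot] at ht; linarith
      rw [eVariationOn.eq_of_eqOn (hE2 s t hs),
        eVariationOn.comp_eq_of_monotoneOn (α m) _
          (fun a _ b _ hab => show a + (L n - T₀) ≤ b + (L n - T₀) by linarith),
        Set.image_add_const_Icc,
        (hus m).2 (s + (L n - T₀)) (t + (L n - T₀)) (by linarith [hL0 n]) (by linarith) htL]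
      congr 1; ring
    have hvar : ∀ s t : ℝ, 0 ≤ s → s ≤ t → t ≤ Ltot →
        eVariationOn γ (Set.Icc s t) = ENNReal.ofReal (t - s) := by
      intro s t hs hst ht
      rcases le_total t T₀ with h1 | h1
      · exact hvar1 s t hs hst h1
      rcases le_total T₀ s with h2 | h2
      · exact hvar2 s t h2 hst ht
      have hadd := eVariationOn.Icc_add_Icc γ (s := Set.univ) h2 h1 (Set.mem_univ T₀)
      simp only [Set.univ_inter] at hadd
      rw [← hadd, hvar1 s T₀ hs h2 le_rfl, hvar2 T₀ t le_rfl h1 ht,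
        ← ENNReal.ofReal_add (by linarith) (by linarith)]
      congr 1; ring
    have hγu : IsUnitSpeed γ Ltot := isUnitSpeed_of_var hvar
    have hγ0 : γ 0 = α n (L n) := by
      simp only [hγ]; rw [if_pos hT₀, hβ0]
    have hγL : γ Ltot = α m (L m) := by
      simp only [hγ]
      by_cases h' : Ltot ≤ T₀
      · have hLm : L m = L n := le_antisymm (by rw [hLtot] at h'; linarith) hLnm
        have hLT : Ltot = T₀ := by rw [hLtot, hLm]; ring
        rw [if_pos h', hLT, hβT, hLm]
      · rw [if_neg h']; congr 1; rw [hLtot]; ring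
    have hle : confDist (rho ε p) (α n (L n)) (α m (L m)) ≤
        ∫ t in (0:ℝ)..Ltot, rho ε p (γ t) := by
      unfold confDist
      exact csInf_le (confSet_bddBelow ε p _ _) ⟨γ, Ltot, hLtot0, hγu, hγ0, hγL, rfl⟩
    have hcont : ContinuousOn (fun t => rho ε p (γ t)) (Set.Icc 0 Ltot) :=
      (rho_continuous ε p).comp_continuousOn hγu.1
    have hi1 : IntervalIntegrable (fun t => rho ε p (γ t)) MeasureTheory.volume 0 T₀ := by
      apply ContinuousOn.intervalIntegrable
      rw [Set.uIcc_of_le hT₀]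
      exact hcont.mono (Set.Icc_subset_Icc le_rfl hT₀Ltot)
    have hi2 : IntervalIntegrable (fun t => rho ε p (γ t)) MeasureTheory.volume T₀ Ltot := by
      apply ContinuousOn.intervalIntegrable
      rw [Set.uIcc_of_le hT₀Ltot]
      exact hcont.mono (Set.Icc_subset_Icc hT₀ le_rfl)
    have hsplit : (∫ t in (0:ℝ)..Ltot, rho ε p (γ t))
        = (∫ t in (0:ℝ)..T₀, rho ε p (γ t)) + ∫ t in T₀..Ltot, rho ε p (γ t) :=
      (intervalIntegral.integral_add_adjacent_intervals hi1 hi2).symm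
    have hpb1 : ∀ t ∈ Set.Icc (0:ℝ) T₀,
        rho ε p (γ t) ≤ Real.exp (ε * (h - L n) + ε * t) := by
      intro t ht
      have hγt : γ t = β t := hE1 0 T₀ le_rfl ht
      have hd1 : dist (β 0) (β t) ≤ t - 0 := hβu.dist_le le_rfl ht.1 ht.2
      have hd2 : L n - h ≤ dist (α n (L n)) p := by
        have := hshort n; rw [dist_comm]; linarith
      have hd3 : dist (α n (L n)) p ≤ dist (α n (L n)) (β t) + dist (β t) p :=
        dist_triangle _ _ _
      have hd4 : dist (α n (L n)) (β t) ≤ t := by rw [← hβ0]; linarith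
      rw [hγt]
      unfold rho
      apply Real.exp_le_exp.mpr
      nlinarith [mul_le_mul_of_nonneg_left
        (show L n - h - t ≤ dist (β t) p by linarith) hε.le]
    have hpb2 : ∀ t ∈ Set.Icc T₀ Ltot,
        rho ε p (γ t) ≤ Real.exp (ε * (h - L n + T₀) + (-ε) * t) := by
      intro t ht
      have hγt : γ t = α m (t + (L n - T₀)) := hE2 T₀ Ltot le_rfl ht
      have hs1 : L n ≤ t + (L n - T₀) := by linarith [ht.1]
      have hs2 : t + (L n - T₀) ≤ L m := by
        have := ht.2; rw [hLtot] at this; linarith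
      have hd1 : dist (α m (L m)) (α m (t + (L n - T₀))) ≤ L m - (t + (L n - T₀)) := by
        have := (hus m).dist_le (by linarith [hL0 n]) hs2 le_rfl
        rw [dist_comm]; linarith
      have hd2 : L m - h ≤ dist (α m (L m)) p := by
        have := hshort m; rw [dist_comm]; linarith
      have hd3 : dist (α m (L m)) p ≤ dist (α m (L m)) (α m (t + (L n - T₀)))
          + dist (α m (t + (L n - T₀))) p := dist_triangle _ _ _
      rw [hγt]
      unfold rho
      apply Real.exp_le_exp.mpr
      nlinarith [mul_le_mul_of_nonneg_left
        (show t + (L n - T₀) - h ≤ dist (α m (t + (L n - T₀))) p by linarith) hε.le]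
    have hib1 : (∫ t in (0:ℝ)..T₀, rho ε p (γ t)) ≤
        (Real.exp (ε * (h - L n) + ε * T₀) - Real.exp (ε * (h - L n) + ε * 0)) / ε := by
      rw [← integral_exp_linear 0 T₀ (ε * (h - L n)) ε hε.ne']
      have hci : Continuous fun t : ℝ => Real.exp (ε * (h - L n) + ε * t) :=
        Real.continuous_exp.comp (continuous_const.add (continuous_const.mul continuous_id))
      exact intervalIntegral.integral_mono_on hT₀ hi1 (hci.intervalIntegrable _ _) hpb1
    have hib2 : (∫ t in T₀..Ltot, rho ε p (γ t)) ≤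
        (Real.exp (ε * (h - L n + T₀) + (-ε) * Ltot)
          - Real.exp (ε * (h - L n + T₀) + (-ε) * T₀)) / (-ε) := by
      rw [← integral_exp_linear T₀ Ltot (ε * (h - L n + T₀)) (-ε) (neg_ne_zero.mpr hε.ne')]
      have hci : Continuous fun t : ℝ => Real.exp (ε * (h - L n + T₀) + -ε * t) :=
        Real.continuous_exp.comp (continuous_const.add (continuous_const.mul continuous_id))
      exact intervalIntegral.integral_mono_on hT₀Ltot hi2 (hci.intervalIntegrable _ _) hpb2
    have hfin : (∫ t in (0:ℝ)..Ltot, rho ε p (γ t))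
        ≤ Real.exp (ε * (h - L n) + ε * T₀) / ε := by
      rw [hsplit]
      have e1 : Real.exp (ε * (h - L n + T₀) + (-ε) * T₀) = Real.exp (ε * (h - L n) + ε * 0) := by
        congr 1; ring
      have e2 : (Real.exp (ε * (h - L n + T₀) + (-ε) * Ltot)
            - Real.exp (ε * (h - L n + T₀) + (-ε) * T₀)) / (-ε)
          = (Real.exp (ε * (h - L n) + ε * 0)
            - Real.exp (ε * (h - L n + T₀) + (-ε) * Ltot)) / ε := by
        rw [e1]; ring
      rw [e2] at hib2
      have hp1 : (0:ℝ) < Real.exp (ε * (h - L n + T₀) + (-ε) * Ltot) := Real.exp_pos _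
      have hsum : (∫ t in (0:ℝ)..T₀, rho ε p (γ t)) + (∫ t in T₀..Ltot, rho ε p (γ t))
          ≤ (Real.exp (ε * (h - L n) + ε * T₀)
            - Real.exp (ε * (h - L n + T₀) + (-ε) * Ltot)) / ε := by
        have := add_le_add hib1 hib2
        calc (∫ t in (0:ℝ)..T₀, rho ε p (γ t)) + (∫ t in T₀..Ltot, rho ε p (γ t))
            ≤ (Real.exp (ε * (h - L n) + ε * T₀) - Real.exp (ε * (h - L n) + ε * 0)) / ε
              + (Real.exp (ε * (h - L n) + ε * 0)
                - Real.exp (ε * (h - L n + T₀) + (-ε) * Ltot)) / ε := this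
          _ = (Real.exp (ε * (h - L n) + ε * T₀)
                - Real.exp (ε * (h - L n + T₀) + (-ε) * Ltot)) / ε := by ring
      refine hsum.trans ?_
      gcongr
      linarith
    have hK2 : Real.exp (ε * (h - L n) + ε * T₀) / ε
        ≤ (1 / ε) * Real.exp (ε * K) * Real.exp (-(ε * L n)) := by
      have e3 : Real.exp (ε * (h - L n) + ε * T₀)
          = Real.exp (ε * (h + T₀)) * Real.exp (-(ε * L n)) := by
        rw [← Real.exp_add]; congr 1; ring
      rw [e3]
      have hexp : Real.exp (ε * (h + T₀)) ≤ Real.exp (ε * K) := by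
        apply Real.exp_le_exp.mpr
        apply mul_le_mul_of_nonneg_left _ hε.le
        rw [hK]; linarith
      calc Real.exp (ε * (h + T₀)) * Real.exp (-(ε * L n)) / ε
          ≤ Real.exp (ε * K) * Real.exp (-(ε * L n)) / ε := by gcongr
        _ = (1 / ε) * Real.exp (ε * K) * Real.exp (-(ε * L n)) := by ring
    exact hle.trans (hfin.trans hK2)
  refine ⟨key, ?_, ?_⟩
  · intro η hη
    have h1 : Filter.Tendsto (fun n => ε * L n) Filter.atTop Filter.atTop :=
      htend.const_mul_atTop hε
    have h2 : Filter.Tendsto (fun n => -(ε * L n)) Filter.atTop Filter.atBot :=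
      Filter.tendsto_neg_atBot_iff.mpr h1
    have h3 : Filter.Tendsto (fun n => Real.exp (-(ε * L n))) Filter.atTop (nhds 0) :=
      Real.tendsto_exp_atBot.comp h2
    have htend0 : Filter.Tendsto
        (fun n => (1 / ε) * Real.exp (ε * K) * Real.exp (-(ε * L n)))
        Filter.atTop (nhds 0) := by
      simpa using h3.const_mul ((1 / ε) * Real.exp (ε * K))
    obtain ⟨N, hN⟩ := (htend0.eventually (gt_mem_nhds hη)).exists
    refine ⟨N, fun m n hm hn => ?_⟩
    have hmain : ∀ a b : ℕ, N ≤ a → a ≤ b →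
        confDist (rho ε p) (α a (L a)) (α b (L b)) < η := by
      intro a b ha hab
      calc confDist (rho ε p) (α a (L a)) (α b (L b))
          ≤ (1 / ε) * Real.exp (ε * K) * Real.exp (-(ε * L a)) := key a b hab
        _ ≤ (1 / ε) * Real.exp (ε * K) * Real.exp (-(ε * L N)) := by
            have : Real.exp (-(ε * L a)) ≤ Real.exp (-(ε * L N)) :=
              Real.exp_le_exp.mpr (by nlinarith [mul_le_mul_of_nonneg_left (hmono ha) hε.le])
            have hc : (0:ℝ) ≤ (1 / ε) * Real.exp (ε * K) := by positivity
            nlinarith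
        _ < η := hN
    rcases le_total m n with hmn | hmn
    · exact hmain m n hm hmn
    · show confDist (rho ε p) (α m (L m)) (α n (L n)) < η
      rw [confDist_symm]
      exact hmain n m hn hmn
  · rintro ⟨z, hz⟩
    set C := Real.exp (-(ε * dist z p)) / ε with hC
    have hCpos : 0 < C := by rw [hC]; positivity
    have hone : Real.exp (-ε) < 1 := by
      calc Real.exp (-ε) < Real.exp 0 := Real.exp_lt_exp.mpr (by linarith)
        _ = 1 := Real.exp_zero
    have hcrit : 0 < C * (1 - Real.exp (-ε)) := by nlinarith
    have h1 := hz.eventually (gt_mem_nhds hcrit)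
    have h2 := htend.eventually (Filter.eventually_ge_atTop (h + dist z p + 1))
    obtain ⟨n, hn1, hn2⟩ := (h1.and h2).exists
    have hn1' : confDist (rho ε p) (α n (L n)) z < C * (1 - Real.exp (-ε)) := hn1
    have h3 := confDist_lower hint hε p (α n (L n)) z
    have h4 : 1 ≤ dist (α n (L n)) z := by
      have ha : L n - h ≤ dist (α n (L n)) p := by
        have := hshort n; rw [dist_comm]; linarith
      have hb := dist_triangle (α n (L n)) z p
      linarith
    have h5 : Real.exp (-(ε * dist (α n (L n)) z)) ≤ Real.exp (-ε) :=
      Real.exp_le_exp.mpr (by nlinarith [mul_le_mul_of_nonneg_left h4 hε.le])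
    have h6 : C * (1 - Real.exp (-ε))
        ≤ C * (1 - Real.exp (-(ε * dist (α n (L n)) z))) := by nlinarith
    rw [← hC] at h3
    linarith
end
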